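/- arXiv:1702.08321 — 5 statements merged into one kernel-verified Lean document; each statement's English description precedes it below -/
import Mathlib

section
/- For odd positive integers p·m (i.e., p and m both odd), ∑_{k=1}^{∞} artanh(L_{pm}/L_{p(2k+m)}) = ∑_{k=1}^{m} artanh(φ^{-2pk}), where φ is the golden ratio and L the Lucas sequence. -/
/-!
For odd `n` the Lucas number is `L n = φ ^ n - φ⁻¹ ^ n`. Together with the subtraction formula
`artanh x - artanh y = artanh ((x - y) / (1 - x y))` this turns the `k`-th term into
`g k - g (k + m)` with `g j = artanh (φ⁻¹ ^ (2 p (j + 1)))`. Since `g` decreases to `0`, the terms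
are nonnegative and the series telescopes (with lag `m`) to `g 0 + ⋯ + g (m - 1)`.
-/

noncomputable def phi : ℝ := (1 + Real.sqrt 5) / 2

noncomputable def artanh (x : ℝ) : ℝ := (1 / 2) * Real.log ((1 + x) / (1 - x))

def lucas : ℕ → ℕ
  | 0 => 2
  | 1 => 1
  | n + 2 => lucas n + lucas (n + 1)

open Filter Topology Finset
open scoped goldenRatio

theorem phi_eq_goldenRatio : phi = φ := rfl

theorem artanh_sub_artanh {x y : ℝ} (hx : x ∈ Set.Ioo (-1) 1) (hy : y ∈ Set.Ioo (-1) 1) :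
    artanh x - artanh y = artanh ((x - y) / (1 - x * y)) := by
  obtain ⟨hx₀, hx₁⟩ := hx
  obtain ⟨hy₀, hy₁⟩ := hy
  have hxy : 0 < 1 - x * y := by nlinarith
  have hx₀' : 0 < 1 + x := by linarith
  have hx₁' : 0 < 1 - x := by linarith
  have hy₀' : 0 < 1 + y := by linarith
  have hy₁' : 0 < 1 - y := by linarith
  have h_add : 1 + (x - y) / (1 - x * y) = (1 + x) * (1 - y) / (1 - x * y) := by
    field_simp; ring
  have h_sub : 1 - (x - y) / (1 - x * y) = (1 - x) * (1 + y) / (1 - x * y) := by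
    field_simp; ring
  unfold artanh
  rw [← mul_sub, ← Real.log_div (by positivity) (by positivity), h_add, h_sub]
  congr 2
  field_simp

theorem artanh_le_artanh {x y : ℝ} (hx : -1 < x) (hy : y < 1) (hxy : x ≤ y) :
    artanh x ≤ artanh y := by
  unfold artanh
  have := Real.log_le_log (div_pos (by linarith : 0 < 1 + x) (by linarith : 0 < 1 - x))
    (div_le_div₀ (by linarith) (by linarith) (by linarith) (by linarith) :
      (1 + x) / (1 - x) ≤ (1 + y) / (1 - y))
  linarith

theorem tendsto_artanh_zero : Tendsto artanh (𝓝 0) (𝓝 0) := by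
  have hc : ContinuousAt artanh 0 :=
    continuousAt_const.mul <| (Real.continuousAt_log (by norm_num)).comp <|
      (continuousAt_const.add continuousAt_id).div (continuousAt_const.sub continuousAt_id)
        (by norm_num)
  simpa [artanh] using hc.tendsto

theorem lucas_eq_goldenRatio_pow_add_goldenConj_pow : ∀ n : ℕ, (lucas n : ℝ) = φ ^ n + ψ ^ n
  | 0 => by norm_num [lucas]
  | 1 => by rw [lucas, pow_one, pow_one, Real.goldenRatio_add_goldenConj, Nat.cast_one]
  | n + 2 => by
    rw [lucas, Nat.cast_add, lucas_eq_goldenRatio_pow_add_goldenConj_pow n,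
      lucas_eq_goldenRatio_pow_add_goldenConj_pow (n + 1)]
    linear_combination -φ ^ n * Real.goldenRatio_sq - ψ ^ n * Real.goldenConj_sq

theorem Odd.lucas_eq {n : ℕ} (hn : Odd n) : (lucas n : ℝ) = φ ^ n - φ⁻¹ ^ n := by
  rw [lucas_eq_goldenRatio_pow_add_goldenConj_pow, Real.inv_goldenRatio, hn.neg_pow, sub_neg_eq_add]

theorem artanh_div_sub_inv_pow {t : ℝ} (ht : 1 < t) (b : ℕ) {d : ℕ} (hd : d ≠ 0) :
    artanh ((t ^ b - t⁻¹ ^ b) / (t ^ (b + 2 * d) - t⁻¹ ^ (b + 2 * d))) =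
      artanh (t⁻¹ ^ (2 * d)) - artanh (t⁻¹ ^ (2 * (b + d))) := by
  have hr₀ : 0 < t⁻¹ := by positivity
  have hr₁ : t⁻¹ < 1 := inv_lt_one_of_one_lt₀ ht
  have mem : ∀ {n}, n ≠ 0 → t⁻¹ ^ n ∈ Set.Ioo (-1) 1 := fun {n} hn =>
    ⟨by linarith [pow_pos hr₀ n], pow_lt_one₀ hr₀.le hr₁ hn⟩
  rw [artanh_sub_artanh (mem (by omega)) (mem (by omega))]
  congr 1
  have hu : 1 ≤ t ^ b := one_le_pow₀ ht.le
  have hw : 1 < t ^ d := one_lt_pow₀ ht hd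
  rw [show b + 2 * d = b + d + d by ring, show 2 * (b + d) = b + d + (b + d) by ring, two_mul]
  simp only [inv_pow, pow_add]
  generalize t ^ b = u at *
  generalize t ^ d = w at *
  have hww : 1 < w * w := by nlinarith
  have huww : 1 < u * w * w := by nlinarith [mul_nonneg (sub_nonneg.2 hu) (sub_nonneg.2 hww.le)]
  have : u * w * w - (u * w * w)⁻¹ ≠ 0 := by linarith [inv_lt_one_of_one_lt₀ huww]
  have : 1 - (w * w)⁻¹ * (u * w * (u * w))⁻¹ ≠ 0 := by
    have := mul_lt_one_of_nonneg_of_lt_one_left (inv_pos.2 (by positivity : 0 < w * w)).le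
      (inv_lt_one_of_one_lt₀ hww) (inv_le_one_of_one_le₀ (by nlinarith : 1 ≤ u * w * (u * w)))
    linarith
  field_simp

theorem hasSum_sub_add_of_antitone {g : ℕ → ℝ} (hg : Antitone g) (h0 : Tendsto g atTop (𝓝 0))
    (m : ℕ) : HasSum (fun k => g k - g (k + m)) (∑ j ∈ range m, g j) := by
  have partial_sum (N : ℕ) :
      ∑ k ∈ range N, (g k - g (k + m)) = ∑ j ∈ range m, g j - ∑ j ∈ range m, g (N + j) := by
    have := sum_range_add g N m
    rw [add_comm N m, sum_range_add] at this
    simp only [sum_sub_distrib, add_comm _ m]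
    linarith
  rw [hasSum_iff_tendsto_nat_of_nonneg (fun k => sub_nonneg.2 (hg (Nat.le_add_right k m)))]
  simp only [partial_sum]
  have : Tendsto (fun N => ∑ j ∈ range m, g (N + j)) atTop (𝓝 0) := by
    simpa using tendsto_finsetSum (range m)
      fun j _ => h0.comp (tendsto_atTop_mono (fun N => Nat.le_add_right N j) tendsto_id)
  simpa using this.const_sub (∑ j ∈ range m, g j)

theorem stmt_8 (p m : ℕ) (hp : Odd p) (hm : Odd m) :
    ∑' k : ℕ, artanh ((lucas (p * m) : ℝ) / (lucas (p * (2 * (k + 1) + m)) : ℝ)) =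
      ∑ k ∈ Finset.Icc 1 m, artanh (phi ^ (-(2 * p * k : ℤ))) := by
  have hφ₀ : 0 < φ⁻¹ := inv_pos.2 Real.goldenRatio_pos
  have hφ₁ : φ⁻¹ < 1 := inv_lt_one_of_one_lt₀ Real.one_lt_goldenRatio
  set g : ℕ → ℝ := fun j => artanh (φ⁻¹ ^ (2 * p * (j + 1)))
  have hg : Antitone g := fun i j hij =>
    artanh_le_artanh (by linarith [pow_pos hφ₀ (2 * p * (j + 1))])
      (pow_lt_one₀ hφ₀.le hφ₁ (by have := hp.pos; positivity))
      (pow_le_pow_of_le_one hφ₀.le hφ₁.le (by gcongr))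
  have hg0 : Tendsto g atTop (𝓝 0) :=
    tendsto_artanh_zero.comp <| (tendsto_pow_atTop_nhds_zero_of_lt_one hφ₀.le hφ₁).comp <|
      tendsto_atTop_mono (fun j => show j ≤ _ by nlinarith [hp.pos]) tendsto_id
  have hterm (k : ℕ) : artanh ((lucas (p * m) : ℝ) / (lucas (p * (2 * (k + 1) + m)) : ℝ)) =
      g k - g (k + m) := by
    have hb : p * (2 * (k + 1) + m) = p * m + 2 * (p * (k + 1)) := by ring
    have hodd : Odd (p * m + 2 * (p * (k + 1))) := (hp.mul hm).add_even (even_two_mul _)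
    rw [hb, (hp.mul hm).lucas_eq, hodd.lucas_eq,
      artanh_div_sub_inv_pow Real.one_lt_goldenRatio _ (by have := hp.pos; positivity)]
    simp only [g]
    ring_nf
  rw [tsum_congr hterm, (hasSum_sub_add_of_antitone hg hg0 m).tsum_eq, range_eq_Ico,
    sum_Ico_add' (fun k => artanh (φ⁻¹ ^ (2 * p * k))) 0 m 1, Ico_add_one_right_eq_Icc]
  refine sum_congr rfl fun k _ => ?_
  rw [show -(2 * p * k : ℤ) = -((2 * p * k : ℕ) : ℤ) by push_cast; ring, zpow_neg, zpow_natCast,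
    phi_eq_goldenRatio, ← inv_pow]
end

section
/- The infinite product ∏_{k=1}^{∞} (F_{2k+2} + 1)/(F_{2k+2} - 1) converges and equals 3. -/
open Nat Filter Finset

private lemma fibcast (n : ℕ) : (Nat.fib (n+2) : ℝ) = Nat.fib (n+1) + Nat.fib n := by
  rw [Nat.fib_add_two]; push_cast; ring

private lemma fibA (n : ℕ) :
    (Nat.fib n : ℝ) * Nat.fib (n+2) - (Nat.fib (n+1))^2 = -(-1)^n := by
  induction n with
  | zero => simp
  | succ n ih =>
    have c2 : (Nat.fib (n+2) : ℝ) = Nat.fib (n+1) + Nat.fib n := fibcast n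
    have c3 : (Nat.fib (n+3) : ℝ) = Nat.fib (n+2) + Nat.fib (n+1) := fibcast (n+1)
    simp only [show n+1+2 = n+3 from rfl, show n+1+1 = n+2 from rfl, c3, c2, pow_succ] at ih ⊢
    linear_combination -ih

private lemma fibB (n : ℕ) :
    (Nat.fib (n+1) : ℝ) * Nat.fib (n+4) - (Nat.fib (n+2) : ℝ) * Nat.fib (n+3) = (-1)^n := by
  have c2 : (Nat.fib (n+2) : ℝ) = Nat.fib (n+1) + Nat.fib n := fibcast n
  have c3 : (Nat.fib (n+3) : ℝ) = Nat.fib (n+2) + Nat.fib (n+1) := fibcast (n+1)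
  have c4 : (Nat.fib (n+4) : ℝ) = Nat.fib (n+3) + Nat.fib (n+2) := fibcast (n+2)
  have := fibA (n+1)
  simp only [show n+1+2 = n+3 from rfl, show n+1+1 = n+2 from rfl, c4, c3, c2, pow_succ] at this ⊢
  linear_combination this

private lemma fibU (n : ℕ) :
    (Nat.fib (n+1) : ℝ) * Nat.fib (n+2) - (Nat.fib n : ℝ) * Nat.fib (n+3) = (-1)^n := by
  have c2 : (Nat.fib (n+2) : ℝ) = Nat.fib (n+1) + Nat.fib n := fibcast n
  have c3 : (Nat.fib (n+3) : ℝ) = Nat.fib (n+2) + Nat.fib (n+1) := fibcast (n+1)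
  have := fibA n
  simp only [c3, c2] at this ⊢
  linear_combination -this

/-- the double-index Fibonacci number in terms of neighbours -/
private lemma fibD (n : ℕ) :
    (Nat.fib (2*n+4) : ℝ) =
      Nat.fib (n+1) * Nat.fib (n+2) + Nat.fib (n+2) * Nat.fib (n+3) := by
  have := Nat.fib_add (n+1) (n+2)
  have h : n+1+(n+2)+1 = 2*n+4 := by ring
  rw [h] at this
  rw [this]
  push_cast
  ring

private lemma fibI (n : ℕ) :
    (Nat.fib (n+1) : ℝ) * (Nat.fib (n+2) + Nat.fib (n+4)) = Nat.fib (2*n+4) + (-1)^n := by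
  rw [fibD n]
  linear_combination fibB n

private lemma fibII (n : ℕ) :
    (Nat.fib (n+3) : ℝ) * (Nat.fib n + Nat.fib (n+2)) = Nat.fib (2*n+4) - (-1)^n := by
  rw [fibD n]
  linear_combination -fibU n

private lemma fibW (n : ℕ) :
    ((Nat.fib n : ℝ) + Nat.fib (n+2)) * Nat.fib (n+2)
      - Nat.fib (n+1) * (Nat.fib (n+1) + Nat.fib (n+3)) = -2*(-1)^n := by
  have h1 := fibA n
  have h2 := fibA (n+1)
  simp only [show n+1+2 = n+3 from rfl, show n+1+1 = n+2 from rfl] at h2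
  linear_combination h1 - h2

private noncomputable def rr (n : ℕ) : ℝ :=
  ((Nat.fib n + Nat.fib (n+2)) * Nat.fib (n+2)) /
    (Nat.fib (n+1) * (Nat.fib (n+1) + Nat.fib (n+3)))

private noncomputable def ff (k : ℕ) : ℝ :=
  ((Nat.fib (2*k+4) : ℝ) + 1) / ((Nat.fib (2*k+4) : ℝ) - 1)

private lemma one_le_fib (m : ℕ) : (1:ℝ) ≤ Nat.fib (m+1) := by
  exact_mod_cast Nat.fib_pos.mpr m.succ_pos

private lemma prodFormula (N : ℕ) :
    ∏ k ∈ Finset.range N, ff k = if Even N then 3 * rr N else 3 / rr N := by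
  induction N with
  | zero => norm_num [rr]
  | succ N ih =>
    rw [Finset.prod_range_succ, ih]
    have a1 := one_le_fib N
    have a2 := one_le_fib (N+1)
    have a3 := one_le_fib (N+2)
    have a4 := one_le_fib (N+3)
    have l1 : (0:ℝ) < Nat.fib N + Nat.fib (N+2) := by positivity
    have l2 : (0:ℝ) < Nat.fib (N+1) + Nat.fib (N+3) := by positivity
    have l3 : (0:ℝ) < Nat.fib (N+2) + Nat.fib (N+4) := by positivity
    rcases Nat.even_or_odd N with hN | hN
    · have hsgn : (-1:ℝ)^N = 1 := hN.neg_one_pow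
      have hI := fibI N; have hII := fibII N
      rw [hsgn] at hI hII
      have hf : ff N = ((Nat.fib (N+1) : ℝ) * (Nat.fib (N+2) + Nat.fib (N+4))) /
          ((Nat.fib (N+3) : ℝ) * (Nat.fib N + Nat.fib (N+2))) := by
        rw [ff, hI, hII]
      rw [if_pos hN, if_neg (Nat.even_add_one.not.mpr (not_not.mpr hN)), hf, rr, rr]
      rw [show N+1+1 = N+2 from rfl, show N+1+2 = N+3 from rfl, show N+1+3 = N+4 from rfl]
      field_simp
    · have hsgn : (-1:ℝ)^N = -1 := hN.neg_one_pow
      have hI := fibI N; have hII := fibII N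
      rw [hsgn] at hI hII
      have hplus : (Nat.fib (N+3) : ℝ) * (Nat.fib N + Nat.fib (N+2))
          = (Nat.fib (2*N+4) : ℝ) + 1 := by linarith
      have hminus : (Nat.fib (N+1) : ℝ) * (Nat.fib (N+2) + Nat.fib (N+4))
          = (Nat.fib (2*N+4) : ℝ) - 1 := by linarith
      have hf : ff N = ((Nat.fib (N+3) : ℝ) * (Nat.fib N + Nat.fib (N+2))) /
          ((Nat.fib (N+1) : ℝ) * (Nat.fib (N+2) + Nat.fib (N+4))) := by
        rw [ff, hplus, hminus]
      rw [if_neg (Nat.not_even_iff_odd.mpr hN), if_pos (Nat.even_add_one.mpr (Nat.not_even_iff_odd.mpr hN)), hf, rr, rr]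
      rw [show N+1+1 = N+2 from rfl, show N+1+2 = N+3 from rfl, show N+1+3 = N+4 from rfl]
      field_simp

private lemma prodBounds (N : ℕ) :
    3 - 6 / (Nat.fib (N+1) : ℝ) ≤ ∏ k ∈ Finset.range N, ff k ∧
      ∏ k ∈ Finset.range N, ff k ≤ 3 := by
  rw [prodFormula]
  have a2 := one_le_fib N
  have a4 := one_le_fib (N+2)
  have l2 : (2:ℝ) ≤ Nat.fib (N+1) + Nat.fib (N+3) := by linarith
  have hD : (2:ℝ) ≤ Nat.fib (N+1) * (Nat.fib (N+1) + Nat.fib (N+3)) := by nlinarith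
  set D : ℝ := Nat.fib (N+1) * (Nat.fib (N+1) + Nat.fib (N+3)) with hDdef
  have hDpos : (0:ℝ) < D := by linarith
  have hDge : (Nat.fib (N+1) : ℝ) ≤ D := by nlinarith
  have hW := fibW N
  rw [← hDdef] at hW
  rcases Nat.even_or_odd N with hN | hN
  · have hsgn : (-1:ℝ)^N = 1 := hN.neg_one_pow
    rw [hsgn] at hW
    have hr : rr N = (D - 2) / D := by
      rw [rr, ← hDdef]
      congr 1
      linarith
    have h3 : 3 * ((D - 2) / D) = 3 - 6 / D := by
      field_simp
      ring
    rw [if_pos hN, hr, h3]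
    constructor
    · have hle : 6 / D ≤ 6 / (Nat.fib (N+1) : ℝ) := by
        apply div_le_div_of_nonneg_left (by norm_num) (by linarith) hDge
      linarith
    · have : 0 < 6 / D := by positivity
      linarith
  · have hsgn : (-1:ℝ)^N = -1 := hN.neg_one_pow
    rw [hsgn] at hW
    have hr : rr N = (D + 2) / D := by
      rw [rr, ← hDdef]
      congr 1
      linarith
    have h3 : 3 / ((D + 2) / D) = 3 - 6 / (D + 2) := by
      rw [div_div_eq_mul_div]
      field_simp
      ring
    rw [if_neg (Nat.not_even_iff_odd.mpr hN), hr, h3]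
    constructor
    · have hle : 6 / (D + 2) ≤ 6 / (Nat.fib (N+1) : ℝ) := by
        apply div_le_div_of_nonneg_left (by norm_num) (by linarith) (by linarith)
      linarith
    · have : 0 < 6 / (D + 2) := by positivity
      linarith

private lemma one_le_ff (k : ℕ) : (1:ℝ) ≤ ff k := by
  have h4 : (3:ℝ) ≤ Nat.fib (2*k+4) := by
    have : Nat.fib 4 ≤ Nat.fib (2*k+4) := Nat.fib_mono (by omega)
    simpa using (by exact_mod_cast this : (3:ℝ) ≤ Nat.fib (2*k+4))
  rw [ff, le_div_iff₀ (by linarith)]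
  linarith

private lemma tendstoProd :
    Filter.Tendsto (fun N => ∏ k ∈ Finset.range N, ff k) atTop (nhds 3) := by
  have hfib : Filter.Tendsto (fun N : ℕ => (Nat.fib (N+1) : ℝ)) atTop atTop := by
    apply tendsto_atTop_mono (fun N => ?_) tendsto_natCast_atTop_atTop
    have : N ≤ Nat.fib (N+1) := by
      have := Nat.le_fib_add_one (N+1)
      omega
    exact_mod_cast this
  have hlow : Filter.Tendsto (fun N : ℕ => 3 - 6 / (Nat.fib (N+1) : ℝ)) atTop (nhds 3) := by
    have := Filter.Tendsto.div_atTop (tendsto_const_nhds (x := (6:ℝ))) hfib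
    simpa using (tendsto_const_nhds (x := (3:ℝ))).sub this
  exact tendsto_of_tendsto_of_tendsto_of_le_of_le hlow tendsto_const_nhds
    (fun N => (prodBounds N).1) (fun N => (prodBounds N).2)

theorem stmt_10 :
    HasProd (fun k : ℕ =>
      ((Nat.fib (2 * (k + 1) + 2) : ℝ) + 1) / ((Nat.fib (2 * (k + 1) + 2) : ℝ) - 1)) 3 := by
  have hfun : (fun k : ℕ =>
      ((Nat.fib (2 * (k + 1) + 2) : ℝ) + 1) / ((Nat.fib (2 * (k + 1) + 2) : ℝ) - 1)) = ff := by
    funext k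
    rw [ff]
    norm_num [show 2 * (k + 1) + 2 = 2 * k + 4 by ring]
  rw [hfun]
  have mono : Monotone (fun s : Finset ℕ => ∏ i ∈ s, ff i) := by
    intro s t hst
    have hpos : (0:ℝ) ≤ ∏ i ∈ s, ff i :=
      Finset.prod_nonneg fun i _ => le_trans zero_le_one (one_le_ff i)
    have h1 : (1:ℝ) ≤ ∏ i ∈ t \ s, ff i := by
      calc (1:ℝ) = ∏ _i ∈ t \ s, (1:ℝ) := by simp
        _ ≤ ∏ i ∈ t \ s, ff i :=
            Finset.prod_le_prod (by simp) (fun i _ => one_le_ff i)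
    calc ∏ i ∈ s, ff i = 1 * ∏ i ∈ s, ff i := (one_mul _).symm
      _ ≤ (∏ i ∈ t \ s, ff i) * ∏ i ∈ s, ff i := mul_le_mul_of_nonneg_right h1 hpos
      _ = ∏ i ∈ t, ff i := Finset.prod_sdiff hst
  have hlub : IsLUB (Set.range fun s : Finset ℕ => ∏ i ∈ s, ff i) 3 := by
    constructor
    · rintro x ⟨s, rfl⟩
      obtain ⟨N, hN⟩ := s.exists_nat_subset_range
      exact le_trans (mono hN) (prodBounds N).2
    · intro b hb
      refine le_of_tendsto tendstoProd (Filter.Eventually.of_forall fun N => ?_)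
      exact hb ⟨Finset.range N, rfl⟩
  exact tendsto_atTop_isLUB mono hlub
end

section
/- For all positive integers q, n, the infinite product ∏_{k=1}^{∞} (F_{(2n-1)(2k+2q)} + F_{2q(2n-1)})/(F_{(2n-1)(2k+2q)} - F_{2q(2n-1)}) converges and equals ∏_{k=1}^{q} (F_{(2n-1)(2k-1)} · L_{(2n-1)·2k})/(L_{(2n-1)(2k-1)} · F_{(2n-1)·2k}). -/
/-!
Write `m = 2n - 1`, `d = 2qm`, `t = m(k + 1)` and `R j = F_j / L_j`. Binet's formulas give
`F_{d+2t} + (-1)^t F_d = F_{d+t} L_t` and `F_{d+2t} - (-1)^t F_d = L_{d+t} F_t`, so the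
`k`-th factor is `R t / R (d + t)` or `R (d + t) / R t` according to the parity of `k + 1`.
Multiplying the factors in consecutive pairs, the partial product of length `2M` telescopes
to `∏_{i<q} H i / ∏_{i<q} H (M + i)` with `H i = R (m(2i+1)) / R (m(2i+2))`, and the
denominator tends to `1` because `R j → 1/√5`. All factors are at least `1`, so the partial
products increase and their limit along even lengths is the value of the infinite product.
-/

open Real Filter Finset Topology

lemma Finset.prod_range_div_shift {K : Type*} [CommGroupWithZero K] {f : ℕ → K}
    (hf : ∀ i, f i ≠ 0) (p M : ℕ) :
    ∏ i ∈ range M, f i / f (i + p) = (∏ i ∈ range p, f i) / ∏ i ∈ range p, f (M + i) := by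
  have hne : ∀ s : Finset ℕ, ∀ g : ℕ → ℕ, ∏ i ∈ s, f (g i) ≠ 0 := fun s g =>
    prod_ne_zero_iff.2 fun i _ => hf (g i)
  rw [prod_div_distrib, div_eq_div_iff (hne _ _) (hne _ _), ← prod_range_add, add_comm M,
    prod_range_add]
  simp only [add_comm p]

lemma Real.hasProd_of_one_le_of_tendsto_prod_range {f : ℕ → ℝ} (hf : ∀ k, 1 ≤ f k)
    {φ : ℕ → ℕ} (hφ : Tendsto φ atTop atTop) {a : ℝ}
    (ha : Tendsto (fun M => ∏ k ∈ range (φ M), f k) atTop (𝓝 a)) : HasProd f a := by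
  have hpos : ∀ k, 0 < f k := fun k => one_pos.trans_le (hf k)
  have hmono : Monotone fun N => ∏ k ∈ range N, f k := monotone_nat_of_le_succ fun N => by
    rw [prod_range_succ]
    exact le_mul_of_one_le_right (prod_nonneg fun k _ => (hpos k).le) (hf N)
  have hle : ∀ N, ∏ k ∈ range N, f k ≤ a := fun N =>
    ge_of_tendsto ha ((hφ.eventually_ge_atTop N).mono fun M hM => hmono hM)
  have hlim : Tendsto (fun N => ∏ k ∈ range N, f k) atTop (𝓝 a) := by
    have h := tendsto_atTop_ciSup hmono ⟨a, Set.forall_mem_range.2 hle⟩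
    rwa [tendsto_nhds_unique (h.comp hφ) ha] at h
  have ha0 : 0 < a := one_pos.trans_le (by simpa using hle 0)
  have hlog : HasSum (fun k => log (f k)) (log a) := by
    rw [hasSum_iff_tendsto_nat_of_nonneg fun k => log_nonneg (hf k)]
    refine ((continuousAt_log ha0.ne').tendsto.comp hlim).congr fun N => ?_
    exact log_prod fun k _ => (hpos k).ne'
  simpa [exp_log ha0] using hasProd_of_hasSum_log hpos hlog

open scoped goldenRatio

lemma lucas_pos : ∀ n, 0 < lucas n
  | 0 => by simp [lucas]
  | 1 => by simp [lucas]
  | n + 2 => by rw [lucas]; exact Nat.add_pos_left (lucas_pos n) _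

lemma coe_lucas_eq : ∀ n, (lucas n : ℝ) = φ ^ n + ψ ^ n
  | 0 => by norm_num [lucas]
  | 1 => by norm_num [lucas, goldenRatio_add_goldenConj]
  | n + 2 => by
    rw [lucas, Nat.cast_add, coe_lucas_eq n, coe_lucas_eq (n + 1)]
    linear_combination -(φ ^ n * goldenRatio_sq) - ψ ^ n * goldenConj_sq

lemma fib_add_two_mul_add_neg_one_pow_mul_fib (d t : ℕ) :
    (Nat.fib (d + 2 * t) : ℝ) + (-1) ^ t * Nat.fib d = Nat.fib (d + t) * lucas t := by
  rw [← goldenRatio_mul_goldenConj, mul_pow, coe_fib_eq, coe_fib_eq, coe_fib_eq, coe_lucas_eq]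
  ring

lemma fib_add_two_mul_sub_neg_one_pow_mul_fib (d t : ℕ) :
    (Nat.fib (d + 2 * t) : ℝ) - (-1) ^ t * Nat.fib d = lucas (d + t) * Nat.fib t := by
  rw [← goldenRatio_mul_goldenConj, mul_pow, coe_fib_eq, coe_fib_eq, coe_fib_eq, coe_lucas_eq]
  ring

noncomputable section

def fibDivLucas (n : ℕ) : ℝ := Nat.fib n / lucas n

def fibQuot (d t : ℕ) : ℝ :=
  (Nat.fib (d + 2 * t) + Nat.fib d) / (Nat.fib (d + 2 * t) - Nat.fib d)

lemma fibQuot_of_odd (d : ℕ) {t : ℕ} (ht : Odd t) :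
    fibQuot d t = fibDivLucas t / fibDivLucas (d + t) := by
  have hadd : (Nat.fib (d + 2 * t) : ℝ) + Nat.fib d = lucas (d + t) * Nat.fib t := by
    simpa [ht.neg_one_pow] using fib_add_two_mul_sub_neg_one_pow_mul_fib d t
  have hsub : (Nat.fib (d + 2 * t) : ℝ) - Nat.fib d = Nat.fib (d + t) * lucas t := by
    simpa [ht.neg_one_pow, ← sub_eq_add_neg] using fib_add_two_mul_add_neg_one_pow_mul_fib d t
  rw [fibQuot, hadd, hsub, fibDivLucas, fibDivLucas, div_div_div_eq]
  ring

lemma fibQuot_of_even (d : ℕ) {t : ℕ} (ht : Even t) :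
    fibQuot d t = fibDivLucas (d + t) / fibDivLucas t := by
  have hadd : (Nat.fib (d + 2 * t) : ℝ) + Nat.fib d = Nat.fib (d + t) * lucas t := by
    simpa [ht.neg_one_pow] using fib_add_two_mul_add_neg_one_pow_mul_fib d t
  have hsub : (Nat.fib (d + 2 * t) : ℝ) - Nat.fib d = lucas (d + t) * Nat.fib t := by
    simpa [ht.neg_one_pow] using fib_add_two_mul_sub_neg_one_pow_mul_fib d t
  rw [fibQuot, hadd, hsub, fibDivLucas, fibDivLucas, div_div_div_eq]

lemma one_le_fibQuot {d t : ℕ} (hd : 2 ≤ d) (ht : 0 < t) : 1 ≤ fibQuot d t := by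
  have hlt : (Nat.fib d : ℝ) < Nat.fib (d + 2 * t) := by
    exact_mod_cast (Nat.fib_lt_fib hd).2 (by omega)
  rw [fibQuot, one_le_div (by linarith)]
  linarith [(Nat.fib d).cast_nonneg (α := ℝ)]

lemma fibDivLucas_pos {n : ℕ} (hn : 0 < n) : 0 < fibDivLucas n :=
  div_pos (by exact_mod_cast Nat.fib_pos.2 hn) (by exact_mod_cast lucas_pos n)

lemma tendsto_fibDivLucas : Tendsto fibDivLucas atTop (𝓝 (√5)⁻¹) := by
  set r := ψ / φ
  have hr : Tendsto (fun n : ℕ => r ^ n) atTop (𝓝 0) := by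
    refine tendsto_pow_atTop_nhds_zero_of_abs_lt_one ?_
    rw [abs_div, abs_of_pos goldenRatio_pos, div_lt_one goldenRatio_pos, abs_of_neg goldenConj_neg]
    linarith [neg_one_lt_goldenConj, one_lt_goldenRatio]
  have hlim : Tendsto (fun n : ℕ => (1 - r ^ n) / (√5 * (1 + r ^ n))) atTop
      (𝓝 ((1 - 0) / (√5 * (1 + 0)))) :=
    (tendsto_const_nhds.sub hr).div ((tendsto_const_nhds.add hr).const_mul _) (by positivity)
  rw [sub_zero, add_zero, mul_one, one_div] at hlim
  refine hlim.congr fun n => ?_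
  have hL : φ ^ n + ψ ^ n ≠ 0 := by rw [← coe_lucas_eq]; exact_mod_cast (lucas_pos n).ne'
  have hφ : φ ^ n ≠ 0 := pow_ne_zero _ goldenRatio_ne_zero
  rw [fibDivLucas, coe_fib_eq, coe_lucas_eq, div_pow]
  field_simp

def pairRatio (m i : ℕ) : ℝ := fibDivLucas (m * (2 * i + 1)) / fibDivLucas (m * (2 * i + 2))

lemma pairRatio_pos {m : ℕ} (hm : 0 < m) (i : ℕ) : 0 < pairRatio m i :=
  div_pos (fibDivLucas_pos (by positivity)) (fibDivLucas_pos (by positivity))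

lemma tendsto_pairRatio {m : ℕ} (hm : 0 < m) (i : ℕ) :
    Tendsto (fun M => pairRatio m (M + i)) atTop (𝓝 1) := by
  have hidx : ∀ c, Tendsto (fun M => m * (2 * (M + i) + c)) atTop atTop := fun c =>
    tendsto_atTop_mono (fun M => by dsimp only [id]; nlinarith) tendsto_id
  have h := (tendsto_fibDivLucas.comp (hidx 1)).div (tendsto_fibDivLucas.comp (hidx 2))
    (by positivity)
  rwa [div_self (by positivity)] at h

lemma fibQuot_mul_fibQuot {m : ℕ} (hm : Odd m) (q i : ℕ) :
    fibQuot (2 * q * m) (m * (2 * i + 1)) * fibQuot (2 * q * m) (m * (2 * i + 2)) =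
      pairRatio m i / pairRatio m (i + q) := by
  rw [fibQuot_of_odd _ (hm.mul (odd_two_mul_add_one i)),
    fibQuot_of_even _ (Even.mul_left ⟨i + 1, by ring⟩ m), pairRatio, pairRatio,
    div_mul_div_comm, div_div_div_eq]
  ring_nf

lemma prod_range_two_mul_fibQuot {m : ℕ} (hm : Odd m) (q M : ℕ) :
    ∏ k ∈ range (2 * M), fibQuot (2 * q * m) (m * (k + 1)) =
      (∏ i ∈ range q, pairRatio m i) / ∏ i ∈ range q, pairRatio m (M + i) := by
  rw [← prod_range_div_shift (fun i => (pairRatio_pos hm.pos i).ne')]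
  induction M with
  | zero => simp
  | succ M ih =>
    rw [mul_add_one, prod_range_succ, prod_range_succ, mul_assoc, ih, prod_range_succ,
      ← fibQuot_mul_fibQuot hm]

lemma hasProd_fibQuot {m q : ℕ} (hm : Odd m) (hq : 0 < q) :
    HasProd (fun k => fibQuot (2 * q * m) (m * (k + 1))) (∏ i ∈ range q, pairRatio m i) := by
  have htail : Tendsto (fun M => ∏ i ∈ range q, pairRatio m (M + i)) atTop (𝓝 1) := by
    simpa using tendsto_finsetProd (range q) fun i _ => tendsto_pairRatio hm.pos i
  refine hasProd_of_one_le_of_tendsto_prod_range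
    (fun k => one_le_fibQuot (by nlinarith [hm.pos]) (by nlinarith [hm.pos]))
    (tendsto_id.const_mul_atTop' two_pos) ?_
  simp only [prod_range_two_mul_fibQuot hm]
  have h := (tendsto_const_nhds (x := ∏ i ∈ range q, pairRatio m i)).div htail one_ne_zero
  rwa [div_one] at h

lemma prod_Icc_eq_prod_pairRatio (m q : ℕ) :
    ∏ k ∈ Icc 1 q, ((Nat.fib (m * (2 * k - 1)) : ℝ) * lucas (m * (2 * k))) /
        ((lucas (m * (2 * k - 1)) : ℝ) * Nat.fib (m * (2 * k))) =
      ∏ i ∈ range q, pairRatio m i := by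
  rw [← Ico_add_one_right_eq_Icc, prod_Ico_eq_prod_range, Nat.add_sub_cancel]
  refine prod_congr rfl fun i _ => ?_
  rw [pairRatio, fibDivLucas, fibDivLucas, div_div_div_eq,
    show 2 * (1 + i) - 1 = 2 * i + 1 by omega, show 2 * (1 + i) = 2 * i + 2 by ring]

end

theorem stmt_11 (q n : ℕ) (hq : 0 < q) (hn : 0 < n) :
    ∏' k : ℕ,
        ((Nat.fib ((2 * n - 1) * (2 * (k + 1) + 2 * q)) : ℝ) + (Nat.fib (2 * q * (2 * n - 1)) : ℝ)) /
          ((Nat.fib ((2 * n - 1) * (2 * (k + 1) + 2 * q)) : ℝ) - (Nat.fib (2 * q * (2 * n - 1)) : ℝ)) =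
      ∏ k ∈ Finset.Icc 1 q,
        ((Nat.fib ((2 * n - 1) * (2 * k - 1)) : ℝ) * (lucas ((2 * n - 1) * (2 * k)) : ℝ)) /
          ((lucas ((2 * n - 1) * (2 * k - 1)) : ℝ) * (Nat.fib ((2 * n - 1) * (2 * k)) : ℝ)) := by
  have hm : Odd (2 * n - 1) := ⟨n - 1, by omega⟩
  rw [prod_Icc_eq_prod_pairRatio, ← (hasProd_fibQuot hm hq).tprod_eq]
  congr with k
  rw [fibQuot, show (2 * n - 1) * (2 * (k + 1) + 2 * q) =
    2 * q * (2 * n - 1) + 2 * ((2 * n - 1) * (k + 1)) by ring]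
end

section
/- The infinite product ∏_{k=1}^{∞} (√5·F_{2k} + 1)/(√5·F_{2k} - 1) converges and equals φ³, where φ = (1+√5)/2. -/
open Real Filter Topology Finset goldenRatio

theorem hasSum_sub_succ_of_antitone {f : ℕ → ℝ} {a : ℝ} (hf : Antitone f)
    (hlim : Tendsto f atTop (𝓝 a)) : HasSum (fun n ↦ f n - f (n + 1)) (f 0 - a) := by
  rw [hasSum_iff_tendsto_nat_of_nonneg fun n ↦ sub_nonneg.2 (hf n.le_succ)]
  simp only [sum_range_sub']
  exact tendsto_const_nhds.sub hlim

theorem hasProd_div_succ_of_antitone {G : ℕ → ℝ} {a : ℝ} (hG : ∀ n, 0 < G n) (ha : 0 < a)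
    (hanti : Antitone G) (hlim : Tendsto G atTop (𝓝 a)) :
    HasProd (fun n ↦ G n / G (n + 1)) (G 0 / a) := by
  have hlog : HasSum (fun n ↦ log (G n / G (n + 1))) (log (G 0) - log a) := by
    simp only [log_div (hG _).ne' (hG _).ne']
    exact hasSum_sub_succ_of_antitone (fun m n h ↦ log_le_log (hG n) (hanti h))
      ((continuousAt_log ha.ne').tendsto.comp hlim)
  simpa [exp_sub, exp_log (hG 0), exp_log ha] using
    Real.hasProd_of_hasSum_log (fun n ↦ div_pos (hG n) (hG (n + 1))) hlog

theorem sqrt_five_mul_fib_two_mul (m : ℕ) :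
    √5 * (Nat.fib (2 * m) : ℝ) = φ ^ (2 * m) - (φ ^ (2 * m))⁻¹ := by
  rw [coe_fib_eq, mul_div_cancel₀ _ (by positivity), ← inv_pow, inv_goldenRatio,
    Even.neg_pow ⟨m, two_mul m⟩]

noncomputable def oddPowQuot (n : ℕ) : ℝ := (φ ^ (2 * n + 1) + 1) / (φ ^ (2 * n + 1) - 1)

theorem one_lt_goldenRatio_pow_odd (n : ℕ) : 1 < φ ^ (2 * n + 1) :=
  one_lt_pow₀ one_lt_goldenRatio (by omega)

theorem oddPowQuot_eq (n : ℕ) : oddPowQuot n = 1 + 2 / (φ ^ (2 * n + 1) - 1) := by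
  have := one_lt_goldenRatio_pow_odd n
  rw [oddPowQuot, eq_comm, one_add_div (by linarith)]
  ring_nf

theorem oddPowQuot_pos (n : ℕ) : 0 < oddPowQuot n := by
  have := one_lt_goldenRatio_pow_odd n
  exact div_pos (by linarith) (by linarith)

theorem antitone_oddPowQuot : Antitone oddPowQuot := fun m n h ↦ by
  simp only [oddPowQuot_eq, add_le_add_iff_left]
  gcongr
  · linarith [one_lt_goldenRatio_pow_odd m]
  · exact one_lt_goldenRatio.le

theorem tendsto_oddPowQuot : Tendsto oddPowQuot atTop (𝓝 1) := by
  have hpow : Tendsto (fun n : ℕ ↦ φ ^ (2 * n + 1) - 1) atTop atTop :=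
    tendsto_atTop_add_const_right _ (-1) <|
      (tendsto_pow_atTop_atTop_of_one_lt one_lt_goldenRatio).comp <|
        tendsto_atTop_mono (fun n ↦ by dsimp; omega) tendsto_id
  have h := tendsto_const_nhds (x := (1 : ℝ)).add (hpow.const_div_atTop 2)
  rw [add_zero] at h
  exact h.congr fun n ↦ (oddPowQuot_eq n).symm

theorem oddPowQuot_zero : oddPowQuot 0 = φ ^ 3 := by
  have : φ - 1 ≠ 0 := by linarith [one_lt_goldenRatio]
  rw [oddPowQuot, div_eq_iff (by simpa using this)]
  linear_combination (-φ ^ 2 - 1) * goldenRatio_sq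

/-- With `t = x p`, the identities `t² + t - 1 = (t + p)(t - p⁻¹)` and
`t² - t - 1 = (t - p)(t + p⁻¹)` for a root `p` of `X² - X - 1` give the splitting. -/
theorem sub_inv_add_one_div_sub_inv_sub_one {p x : ℝ} (hp : p ^ 2 = p + 1) (hp1 : 1 < p)
    (hx : 1 < x) :
    (x * p - (x * p)⁻¹ + 1) / (x * p - (x * p)⁻¹ - 1) =
      ((x + 1) / (x - 1)) / ((x * p ^ 2 + 1) / (x * p ^ 2 - 1)) := by
  have hxp : p < x * p := lt_mul_left (by linarith) hx
  have hden : 0 < (x * p) ^ 2 - x * p - 1 := by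
    nlinarith [mul_pos (sub_pos.2 hxp) (by linarith : 0 < x * p + p - 1)]
  have hden' : x * p - (x * p)⁻¹ - 1 ≠ 0 := by
    rw [show x * p - (x * p)⁻¹ - 1 = ((x * p) ^ 2 - x * p - 1) / (x * p) by field_simp; ring]
    positivity
  have hsq : 0 < x * p ^ 2 - 1 := by nlinarith
  have hx1 : x - 1 ≠ 0 := by linarith
  rw [div_eq_div_iff hden' (by positivity)]
  field_simp
  linear_combination (2 * x - 2 * x ^ 3 * p ^ 2) * hp

theorem fib_factor_eq_oddPowQuot_div (k : ℕ) :
    (√5 * (Nat.fib (2 * (k + 1)) : ℝ) + 1) / (√5 * (Nat.fib (2 * (k + 1)) : ℝ) - 1) =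
      oddPowQuot k / oddPowQuot (k + 1) := by
  rw [sqrt_five_mul_fib_two_mul, oddPowQuot, oddPowQuot,
    show 2 * (k + 1) + 1 = (2 * k + 1) + 2 by ring, show 2 * (k + 1) = (2 * k + 1) + 1 by ring,
    pow_succ φ (2 * k + 1), pow_add φ (2 * k + 1) 2]
  exact sub_inv_add_one_div_sub_inv_sub_one goldenRatio_sq one_lt_goldenRatio
    (one_lt_goldenRatio_pow_odd k)

theorem stmt_17 :
    HasProd (fun k : ℕ =>
      (Real.sqrt 5 * (Nat.fib (2 * (k + 1)) : ℝ) + 1) /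
        (Real.sqrt 5 * (Nat.fib (2 * (k + 1)) : ℝ) - 1)) (phi ^ 3) := by
  have h := hasProd_div_succ_of_antitone oddPowQuot_pos one_pos antitone_oddPowQuot
    tendsto_oddPowQuot
  rw [div_one, oddPowQuot_zero] at h
  rw [show phi = φ from rfl]
  simpa only [fib_factor_eq_oddPowQuot_div] using h
end

section
/- The infinite product ∏_{k=1}^{∞} (L_{2k+1} + (-1)^{k-1}·√5)/(L_{2k+1} + (-1)^k·√5) converges and equals φ², and ∏_{k=1}^{∞} (L_{2k} + (-1)^{k-1}·√5)/(L_{2k} + (-1)^k·√5) converges and equals φ³, where φ = (1+√5)/2. -/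
/-!
Put `x = φⁿ`. Binet's formula `Lₙ = φⁿ + ψⁿ` with `φψ = -1` gives `x Lₙ = x² + (-1)ⁿ`, and with
`√5 = φ + φ⁻¹` this factors as `x (Lₙ ± √5) = (x ± φ²)(x ∓ φ⁻²)` for odd `n` and
`x (Lₙ ± √5) = (x ± φ)(x ± φ⁻¹)` for even `n`. So the `k`-th factor of the first product is
`r (k + 2) / r k` and that of the second is `r (k + 1) / r k`, where
`r j = (φ^(2j+1) - (-1)^j) / (φ^(2j+1) + (-1)^j)`. Since `r j → 1` geometrically, `log r` is
absolutely summable, so both products telescope unconditionally, to `(r 0 r 1)⁻¹ = φ²` and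
`(r 0)⁻¹ = φ³`.
-/

open Real Finset
open scoped goldenRatio

lemma hasProd_shift_div_of_summable_log {a : ℕ → ℝ} (ha : ∀ k, 0 < a k)
    (hlog : Summable fun k => log (a k)) (m : ℕ) :
    HasProd (fun k => a (k + m) / a k) (∏ i ∈ range m, a i)⁻¹ := by
  have hshift := ((hasSum_nat_add_iff' m).2 hlog.hasSum).sub hlog.hasSum
  rw [sub_sub_cancel_left] at hshift
  have hlog_div : (fun k => log (a (k + m) / a k)) = fun k => log (a (k + m)) - log (a k) :=
    funext fun k => log_div (ha _).ne' (ha _).ne'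
  have hprod := hasProd_of_hasSum_log (fun k => div_pos (ha (k + m)) (ha k)) (hlog_div ▸ hshift)
  rwa [exp_neg, exp_sum, prod_congr rfl fun i _ => exp_log (ha i)] at hprod

lemma sqrt_five_eq_two_mul_goldenRatio_sub_one : √5 = 2 * φ - 1 := by
  rw [goldenRatio]; ring

lemma lucas_eq_goldenRatio_pow_add (n : ℕ) : (lucas n : ℝ) = φ ^ n + ψ ^ n := by
  induction n using Nat.twoStepInduction with
  | zero => norm_num [lucas]
  | one => simp [lucas]
  | more n ih₁ ih₂ =>
    rw [lucas, Nat.cast_add, ih₁, ih₂]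
    linear_combination -φ ^ n * goldenRatio_sq - ψ ^ n * goldenConj_sq

lemma goldenRatio_pow_mul_lucas (n : ℕ) : φ ^ n * lucas n = (φ ^ n) ^ 2 + (-1) ^ n := by
  rw [lucas_eq_goldenRatio_pow_add, mul_add, ← mul_pow φ ψ, goldenRatio_mul_goldenConj]
  ring

lemma three_le_lucas : ∀ n, 3 ≤ lucas (n + 2)
  | 0 => by decide
  | 1 => by decide
  | n + 2 => by
    rw [lucas]
    have := three_le_lucas n
    omega

lemma lucas_add_neg_one_pow_mul_sqrt_five_pos {n : ℕ} (hn : 2 ≤ n) (k : ℕ) :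
    0 < (lucas n : ℝ) + (-1) ^ k * √5 := by
  obtain ⟨m, rfl⟩ := Nat.exists_eq_add_of_le' hn
  have hL : (3 : ℝ) ≤ lucas (m + 2) := by exact_mod_cast three_le_lucas m
  have h5 : √5 < 3 := by rw [sqrt_lt' (by norm_num)]; norm_num
  rcases neg_one_pow_eq_or ℝ k with h | h <;> rw [h] <;> linarith [sqrt_nonneg 5]

noncomputable def oddPowRatio (j : ℕ) : ℝ :=
  (φ ^ (2 * j + 1) - (-1) ^ j) / (φ ^ (2 * j + 1) + (-1) ^ j)

lemma oddPowRatio_pos (j : ℕ) : 0 < oddPowRatio j := by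
  have hx : 1 < φ ^ (2 * j + 1) := one_lt_pow₀ one_lt_goldenRatio (by omega)
  unfold oddPowRatio
  rcases neg_one_pow_eq_or ℝ j with h | h <;> rw [h] <;> exact div_pos (by linarith) (by linarith)

lemma abs_oddPowRatio_sub_one_le (j : ℕ) : |oddPowRatio j - 1| ≤ 2 * φ * ((φ ^ 2)⁻¹) ^ j := by
  have hφ := one_lt_goldenRatio
  have hy : 1 ≤ φ ^ (2 * j) := one_le_pow₀ hφ.le
  have hlow : φ ^ (2 * j) / φ ≤ |φ ^ (2 * j + 1) + (-1) ^ j| := by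
    rw [pow_succ, div_le_iff₀ goldenRatio_pos]
    rcases neg_one_pow_eq_or ℝ j with h | h <;> rw [h] <;>
      · rw [abs_of_pos (by nlinarith)]
        nlinarith [goldenRatio_sq]
  have hden : φ ^ (2 * j + 1) + (-1) ^ j ≠ 0 :=
    abs_pos.mp (lt_of_lt_of_le (by positivity) hlow)
  calc |oddPowRatio j - 1|
      = 2 / |φ ^ (2 * j + 1) + (-1) ^ j| := by
        rw [oddPowRatio, div_sub_one hden, abs_div, sub_add_eq_sub_sub, sub_sub_cancel_left,
          ← neg_add', abs_neg, ← two_mul, abs_mul, abs_neg_one_pow, mul_one, abs_two]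
    _ ≤ 2 / (φ ^ (2 * j) / φ) := div_le_div_of_nonneg_left zero_le_two (by positivity) hlow
    _ = 2 * φ * ((φ ^ 2)⁻¹) ^ j := by rw [inv_pow, ← pow_mul]; field_simp

lemma summable_log_oddPowRatio : Summable fun j => log (oddPowRatio j) := by
  have hq : (φ ^ 2)⁻¹ < 1 := inv_lt_one_of_one_lt₀ (one_lt_pow₀ one_lt_goldenRatio two_ne_zero)
  have hgeom := (summable_geometric_of_lt_one (by positivity) hq).mul_left (2 * φ)
  simpa only [add_sub_cancel] using
    summable_log_one_add_of_summable (hgeom.of_norm_bounded abs_oddPowRatio_sub_one_le)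

lemma lucas_odd_ratio (k : ℕ) :
    ((lucas (2 * (k + 1) + 1) : ℝ) + (-1) ^ k * √5) /
        ((lucas (2 * (k + 1) + 1) : ℝ) + (-1) ^ (k + 1) * √5) =
      oddPowRatio (k + 2) / oddPowRatio k := by
  have hden := lucas_add_neg_one_pow_mul_sqrt_five_pos (n := 2 * (k + 1) + 1) (by omega) (k + 1)
  have hL := goldenRatio_pow_mul_lucas (2 * (k + 1) + 1)
  have h₀ := oddPowRatio_pos k
  have h₂ := oddPowRatio_pos (k + 2)
  have hx₂ : φ ^ (2 * (k + 1) + 1) = φ ^ (2 * k + 1) * φ ^ 2 := by rw [← pow_add]; ring_nf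
  have hx₄ : φ ^ (2 * (k + 2) + 1) = φ ^ (2 * k + 1) * φ ^ 4 := by rw [← pow_add]; ring_nf
  have hσ : ((-1 : ℝ) ^ k) ^ 2 = 1 := by rw [← pow_mul, mul_comm, pow_mul, neg_one_sq, one_pow]
  have hs := sqrt_five_eq_two_mul_goldenRatio_sub_one
  unfold oddPowRatio at h₀ h₂ ⊢
  rw [hx₂, Odd.neg_one_pow ⟨k + 1, by ring⟩] at hL
  rw [hx₄, pow_add (-1 : ℝ) k 2, neg_one_sq, mul_one] at h₂ ⊢
  rw [pow_succ, mul_neg_one] at hden ⊢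
  generalize φ ^ (2 * k + 1) = x at *
  generalize (-1 : ℝ) ^ k = σ at *
  generalize (lucas (2 * (k + 1) + 1) : ℝ) = L at *
  obtain ⟨hn₀, hd₀⟩ := div_ne_zero_iff.mp h₀.ne'
  obtain ⟨hn₂, hd₂⟩ := div_ne_zero_iff.mp h₂.ne'
  rw [div_div_div_eq, div_eq_div_iff hden.ne' (mul_ne_zero hd₂ hn₀)]
  linear_combination -2 * σ * √5 * hσ - 2 * σ * √5 * hL + 2 * σ * x * L * φ ^ 2 * hs -
    2 * σ * x * L * (φ ^ 2 - φ + 1) * goldenRatio_sq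

lemma lucas_even_ratio (k : ℕ) :
    ((lucas (2 * (k + 1)) : ℝ) + (-1) ^ k * √5) /
        ((lucas (2 * (k + 1)) : ℝ) + (-1) ^ (k + 1) * √5) =
      oddPowRatio (k + 1) / oddPowRatio k := by
  have hden := lucas_add_neg_one_pow_mul_sqrt_five_pos (n := 2 * (k + 1)) (by omega) (k + 1)
  have hL := goldenRatio_pow_mul_lucas (2 * (k + 1))
  have h₀ := oddPowRatio_pos k
  have h₁ := oddPowRatio_pos (k + 1)
  have hx₁ : φ ^ (2 * (k + 1)) = φ ^ (2 * k + 1) * φ := by rw [← pow_succ]; ring_nf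
  have hx₂ : φ ^ (2 * (k + 1) + 1) = φ ^ (2 * k + 1) * φ ^ 2 := by rw [← pow_add]; ring_nf
  have hσ : ((-1 : ℝ) ^ k) ^ 2 = 1 := by rw [← pow_mul, mul_comm, pow_mul, neg_one_sq, one_pow]
  have hs := sqrt_five_eq_two_mul_goldenRatio_sub_one
  unfold oddPowRatio at h₀ h₁ ⊢
  rw [hx₁, Even.neg_one_pow ⟨k + 1, by ring⟩] at hL
  rw [hx₂] at h₁ ⊢
  rw [pow_succ (-1 : ℝ) k, mul_neg_one] at h₁ hden ⊢
  generalize φ ^ (2 * k + 1) = x at *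
  generalize (-1 : ℝ) ^ k = σ at *
  generalize (lucas (2 * (k + 1)) : ℝ) = L at *
  obtain ⟨hn₀, hd₀⟩ := div_ne_zero_iff.mp h₀.ne'
  obtain ⟨hn₁, hd₁⟩ := div_ne_zero_iff.mp h₁.ne'
  rw [div_div_div_eq, div_eq_div_iff hden.ne' (mul_ne_zero hd₁ hn₀)]
  linear_combination 2 * σ * √5 * hσ - 2 * σ * √5 * hL + 2 * σ * x * L * φ * hs +
    2 * σ * x * L * goldenRatio_sq

lemma inv_prod_range_two_oddPowRatio : (∏ i ∈ range 2, oddPowRatio i)⁻¹ = φ ^ 2 := by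
  simp only [prod_range_succ, prod_range_zero, one_mul, oddPowRatio]
  norm_num
  have hφ : 0 < φ - 1 := sub_pos.2 one_lt_goldenRatio
  rw [div_mul_div_comm, div_eq_iff (by positivity)]
  linear_combination -φ * (φ + 1) * (φ - 1) * goldenRatio_sq

lemma inv_prod_range_one_oddPowRatio : (∏ i ∈ range 1, oddPowRatio i)⁻¹ = φ ^ 3 := by
  simp only [prod_range_succ, prod_range_zero, one_mul, oddPowRatio]
  norm_num
  rw [div_eq_iff (sub_pos.2 one_lt_goldenRatio).ne']
  linear_combination -(φ ^ 2 + 1) * goldenRatio_sq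

theorem stmt_19 :
    HasProd (fun k : ℕ =>
        ((lucas (2 * (k + 1) + 1) : ℝ) + (-1 : ℝ) ^ ((k + 1) - 1) * Real.sqrt 5) /
          ((lucas (2 * (k + 1) + 1) : ℝ) + (-1 : ℝ) ^ (k + 1) * Real.sqrt 5)) (phi ^ 2) ∧
    HasProd (fun k : ℕ =>
        ((lucas (2 * (k + 1)) : ℝ) + (-1 : ℝ) ^ ((k + 1) - 1) * Real.sqrt 5) /
          ((lucas (2 * (k + 1)) : ℝ) + (-1 : ℝ) ^ (k + 1) * Real.sqrt 5)) (phi ^ 3) := by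
  have htelescope :=
    hasProd_shift_div_of_summable_log oddPowRatio_pos summable_log_oddPowRatio
  simp only [Nat.add_sub_cancel, lucas_odd_ratio, lucas_even_ratio]
  exact ⟨inv_prod_range_two_oddPowRatio ▸ htelescope 2,
    inv_prod_range_one_oddPowRatio ▸ htelescope 1⟩
end
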